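/- Let 𝒢 = {G^0,…,G^{M−1}} be an (M,N,L,Z)-E-CZCS with N ≥ 2, and for each m let d_m = g_0^m ∥ g_1^m ∥ ⋯ ∥ g_{N−1}^m be the concatenation of the sequences of G^m (length NL). Then the M sequences d_0, d_1, …, d_{M−1} form an (M, NL, Z)-ZCZ sequence set. -/
import Mathlib


open Finset

noncomputable section

/-- Aperiodic cross-correlation function (ACCF) of two length-`L` complex
sequences at integer shift `u`. -/
def accf (L : ℕ) (a b : ℕ → ℂ) (u : ℤ) : ℂ :=
  if 0 ≤ u then
    ∑ i ∈ Finset.range (L - u.toNat), a (i + u.toNat) * (starRingEnd ℂ) (b i)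
  else
    ∑ i ∈ Finset.range (L - (-u).toNat), a i * (starRingEnd ℂ) (b (i + (-u).toNat))

/-- Periodic cross-correlation function (PCCF) of two length-`L` complex
sequences at integer shift `u`. -/
def pccf (L : ℕ) (a b : ℕ → ℂ) (u : ℤ) : ℂ :=
  ∑ i ∈ Finset.range L, a ((((i : ℤ) + u) % (L : ℤ)).toNat) * (starRingEnd ℂ) (b i)

/-- `ρ(G,H;u) = Σ_{n=0}^{N-1} ρ(g_n, h_n; u)` for two ordered sets of `N`
length-`L` sequences. -/
def accfSet (L N : ℕ) (G H : ℕ → ℕ → ℂ) (u : ℤ) : ℂ :=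
  ∑ n ∈ Finset.range N, accf L (G n) (H n) u

/-- `ρ̂(G,H;u) = Σ_{n=0}^{N-1} ρ(g_n, h_{(n+1) mod N}; u)`. -/
def accfHat (L N : ℕ) (G H : ℕ → ℕ → ℂ) (u : ℤ) : ℂ :=
  ∑ n ∈ Finset.range N, accf L (G n) (H ((n + 1) % N)) u

/-- Concatenation `g_0 ∥ g_1 ∥ ⋯` of length-`L` sequences. -/
def concatSeq (L : ℕ) (G : ℕ → ℕ → ℂ) : ℕ → ℂ := fun i => G (i / L) (i % L)

/-- Membership of `x` in `T1 ∪ T2` where `T1 = {1,…,Z}` and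
`T2 = {L-Z,…,L-1}`. -/
def inT12 (L Z : ℕ) (x : ℤ) : Prop :=
  (1 ≤ x ∧ x ≤ (Z : ℤ)) ∨ ((L : ℤ) - (Z : ℤ) ≤ x ∧ x ≤ (L : ℤ) - 1)

/-- `(M,N,L,Z)`-enhanced cross Z-complementary set. -/
def IsECZCS (M N L Z : ℕ) (G : ℕ → ℕ → ℕ → ℂ) : Prop :=
  (∀ m1 m2 : ℕ, m1 < M → m2 < M → ∀ u : ℤ,
      ((m1 = m2 ∧ inT12 L Z |u| ∧ 1 ≤ |u| ∧ |u| ≤ (L : ℤ) - 1) ∨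
        (m1 ≠ m2 ∧ (inT12 L Z |u| ∨ u = 0))) →
      accfSet L N (G m1) (G m2) u = 0) ∧
  (∀ m1 m2 : ℕ, m1 < M → m2 < M → ∀ u : ℤ,
      (L : ℤ) - (Z : ℤ) ≤ |u| ∧ |u| ≤ (L : ℤ) - 1 →
      accfHat L N (G m1) (G m2) u = 0)

/-- `(M,L',Z)`-ZCZ sequence set. -/
def IsZCZ (M L' Z : ℕ) (d : ℕ → ℕ → ℂ) : Prop :=
  ∀ i j : ℕ, i < M → j < M → ∀ u : ℤ,
    ((i = j ∧ 1 ≤ |u| ∧ |u| ≤ (Z : ℤ)) ∨ (i ≠ j ∧ |u| ≤ (Z : ℤ))) →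
    pccf L' (d i) (d j) u = 0

lemma emod_lemma (L' : ℕ) (hL' : 0 < L') (x : ℤ) (i : ℕ) (hi : i < L')
    (y : ℤ) (hxy : x + y = 0) :
    ((((((i : ℤ) + x) % (L' : ℤ)).toNat : ℤ) + y) % (L' : ℤ)).toNat = i := by
  have h1 : (0:ℤ) < L' := by exact_mod_cast hL'
  have hc : (((((i : ℤ) + x) % (L' : ℤ)).toNat : ℤ)) = ((i : ℤ) + x) % (L' : ℤ) :=
    Int.toNat_of_nonneg (Int.emod_nonneg _ (by omega))
  rw [hc, Int.add_emod, Int.emod_emod_of_dvd _ dvd_rfl, ← Int.add_emod]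
  have : (i : ℤ) + x + y = (i : ℤ) := by omega
  rw [this, Int.emod_eq_of_lt (by positivity) (by exact_mod_cast hi)]
  omega

lemma pccf_neg (L' : ℕ) (hL' : 0 < L') (a b : ℕ → ℂ) (u : ℤ) :
    pccf L' a b (-u) = (starRingEnd ℂ) (pccf L' b a u) := by
  unfold pccf
  rw [map_sum]
  have h1 : (0:ℤ) < L' := by exact_mod_cast hL'
  refine Finset.sum_nbij' (fun i => (((i : ℤ) + -u) % (L' : ℤ)).toNat)
    (fun i => (((i : ℤ) + u) % (L' : ℤ)).toNat) ?_ ?_ ?_ ?_ ?_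
  · intro i hi
    simp only [mem_range] at *
    have := Int.emod_lt_of_pos ((i:ℤ) + -u) h1
    omega
  · intro i hi
    simp only [mem_range] at *
    have := Int.emod_lt_of_pos ((i:ℤ) + u) h1
    omega
  · intro i hi
    simp only [mem_range] at hi
    exact emod_lemma L' hL' (-u) i hi u (by ring)
  · intro i hi
    simp only [mem_range] at hi
    exact emod_lemma L' hL' u i hi (-u) (by ring)
  · intro i hi
    simp only [mem_range] at hi
    have harg : ((((((((i : ℤ) + -u) % (L' : ℤ)).toNat : ℕ)) : ℤ) + u) % (L' : ℤ)).toNat = i :=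
      emod_lemma L' hL' (-u) i hi u (by ring)
    simp only [harg, map_mul, Complex.conj_conj]
    ring

lemma sum_range_mul' (N L : ℕ) (f : ℕ → ℂ) :
    ∑ i ∈ range (N * L), f i = ∑ n ∈ range N, ∑ k ∈ range L, f (L * n + k) := by
  induction N with
  | zero => simp
  | succ N ih =>
    rw [Nat.succ_mul, Finset.sum_range_add, ih, Finset.sum_range_succ]
    congr 1
    exact Finset.sum_congr rfl (fun k _ => by rw [Nat.mul_comm N L])

lemma decomp (L N : ℕ) (hL : 0 < L) (hN : 0 < N) (A B : ℕ → ℕ → ℂ) (v : ℕ) (hv : v ≤ L) :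
    pccf (N * L) (concatSeq L A) (concatSeq L B) (v : ℤ)
      = accfSet L N A B (v : ℤ) + (starRingEnd ℂ) (accfHat L N B A ((L : ℤ) - (v : ℤ))) := by
  unfold pccf
  have hcast : ∀ i : ℕ, (((i : ℤ) + (v : ℤ)) % ((N * L : ℕ) : ℤ)).toNat = (i + v) % (N * L) := by
    intro i
    rw [← Nat.cast_add, ← Int.natCast_mod, Int.toNat_natCast]
  simp only [hcast]
  rw [sum_range_mul']
  have key : ∀ n ∈ range N, ∀ k ∈ range L,
      concatSeq L A ((L * n + k + v) % (N * L)) * (starRingEnd ℂ) (concatSeq L B (L * n + k))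
        = (if k + v < L then A n (k + v) * (starRingEnd ℂ) (B n k)
           else A ((n + 1) % N) (k + v - L) * (starRingEnd ℂ) (B n k)) := by
    intro n hn k hk
    simp only [mem_range] at hn hk
    have hB : concatSeq L B (L * n + k) = B n k := by
      unfold concatSeq
      rw [Nat.mul_add_div hL, Nat.mul_add_mod, Nat.div_eq_of_lt hk, Nat.mod_eq_of_lt hk]
      simp
    rw [hB]
    by_cases h1 : k + v < L
    · rw [if_pos h1]
      have hlt : L * n + k + v < N * L := by
        calc L * n + k + v < L * n + L := by omega
        _ = L * (n + 1) := by ring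
        _ ≤ L * N := Nat.mul_le_mul_left L hn
        _ = N * L := Nat.mul_comm L N
      rw [Nat.mod_eq_of_lt hlt]
      unfold concatSeq
      rw [Nat.add_assoc, Nat.mul_add_div hL, Nat.mul_add_mod, Nat.div_eq_of_lt h1,
        Nat.mod_eq_of_lt h1]
      simp
    · rw [if_neg h1]
      have heq : L * n + k + v = L * (n + 1) + (k + v - L) := by
        have hx : L * (n + 1) = L * n + L := by ring
        omega
      rw [heq]
      by_cases h2 : n + 1 < N
      · have hlt : L * (n + 1) + (k + v - L) < N * L := by
          have : k + v - L < L := by omega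
          calc L * (n + 1) + (k + v - L) < L * (n + 1) + L := Nat.add_lt_add_left (by omega) _
          _ = L * (n + 2) := by ring
          _ ≤ L * N := Nat.mul_le_mul_left L h2
          _ = N * L := Nat.mul_comm L N
        rw [Nat.mod_eq_of_lt hlt]
        unfold concatSeq
        have hlt2 : k + v - L < L := by omega
        rw [Nat.mul_add_div hL, Nat.mul_add_mod, Nat.div_eq_of_lt hlt2,
          Nat.mod_eq_of_lt hlt2, Nat.mod_eq_of_lt h2]
      · have h3 : n + 1 = N := by omega
        have hmodN : (n + 1) % N = 0 := by rw [h3, Nat.mod_self]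
        have hlt2 : k + v - L < L := by omega
        have hmod : (L * (n + 1) + (k + v - L)) % (N * L) = k + v - L := by
          rw [h3, Nat.mul_comm L N, Nat.add_comm, Nat.add_mod_right]
          exact Nat.mod_eq_of_lt (Nat.lt_of_lt_of_le hlt2 (Nat.le_mul_of_pos_left L hN))
        rw [hmod, hmodN]
        unfold concatSeq
        rw [Nat.div_eq_of_lt hlt2, Nat.mod_eq_of_lt hlt2]
  have key2 : ∀ n ∈ range N,
      ∑ k ∈ range L, concatSeq L A ((L * n + k + v) % (N * L)) *
        (starRingEnd ℂ) (concatSeq L B (L * n + k))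
      = ∑ k ∈ range L, (if k + v < L then A n (k + v) * (starRingEnd ℂ) (B n k)
          else A ((n + 1) % N) (k + v - L) * (starRingEnd ℂ) (B n k)) :=
    fun n hn => Finset.sum_congr rfl (key n hn)
  rw [Finset.sum_congr rfl key2]
  unfold accfSet accfHat accf
  rw [map_sum, ← Finset.sum_add_distrib]
  refine Finset.sum_congr rfl ?_
  intro n hn
  have hsplit : ∀ f : ℕ → ℂ, ∑ k ∈ range L, f k
      = ∑ k ∈ range (L - v), f k + ∑ j ∈ range v, f ((L - v) + j) := by
    intro f
    have hLv' : L - v + v = L := by omega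
    conv_lhs => rw [← hLv']
    rw [Finset.sum_range_add]
  rw [hsplit]
  have hv0 : ((v : ℤ)).toNat = v := Int.toNat_natCast v
  have hLv : ((L : ℤ) - (v : ℤ)).toNat = L - v := by omega
  rw [if_pos (by positivity : (0:ℤ) ≤ (v:ℤ)), if_pos (by omega : (0:ℤ) ≤ (L:ℤ) - (v:ℤ))]
  rw [hv0, hLv, map_sum]
  congr 1
  · refine Finset.sum_congr rfl ?_
    intro k hk
    simp only [mem_range] at hk
    rw [if_pos (by omega : k + v < L), Nat.add_comm k v]
  · have hLLv : L - (L - v) = v := by omega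
    rw [hLLv]
    refine Finset.sum_congr rfl ?_
    intro j hj
    simp only [mem_range] at hj
    rw [if_neg (by omega : ¬ (L - v + j + v < L))]
    have : L - v + j + v - L = j := by omega
    rw [this]
    simp only [map_mul, Complex.conj_conj]
    rw [Nat.add_comm j (L - v)]
    ring

lemma accf_of_ge (L : ℕ) (a b : ℕ → ℂ) (u : ℤ) (h0 : 0 ≤ u) (h : (L : ℤ) ≤ u) :
    accf L a b u = 0 := by
  unfold accf
  rw [if_pos h0]
  have : L - u.toNat = 0 := by omega
  rw [this]
  simp

theorem stmt3 (M N L Z : ℕ) (hN : 2 ≤ N) (hZ1 : 1 ≤ Z) (hZL : Z ≤ L)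
    (G : ℕ → ℕ → ℕ → ℂ) (hG : IsECZCS M N L Z G) :
    IsZCZ M (N * L) Z (fun m => concatSeq L (G m)) := by
  obtain ⟨hC1, hC2⟩ := hG
  have hL : 0 < L := lt_of_lt_of_le hZ1 hZL
  have hN0 : 0 < N := by omega
  have key : ∀ i j : ℕ, i < M → j < M → ∀ v : ℕ, v ≤ Z →
      ((i = j ∧ 1 ≤ v) ∨ i ≠ j) →
      pccf (N * L) (concatSeq L (G i)) (concatSeq L (G j)) (v : ℤ) = 0 := by
    intro i j hi hj v hvZ hcase
    have hvL : v ≤ L := le_trans hvZ hZL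
    rw [decomp L N hL hN0 _ _ v hvL]
    have habs : |(v : ℤ)| = (v : ℤ) := abs_of_nonneg (by positivity)
    have h1 : accfSet L N (G i) (G j) (v : ℤ) = 0 := by
      by_cases hv0 : v = 0
      · subst hv0
        have hne : i ≠ j := by
          rcases hcase with ⟨_, h⟩ | h
          · omega
          · exact h
        exact hC1 i j hi hj 0 (Or.inr ⟨hne, Or.inr rfl⟩)
      · by_cases hvLe : v = L
        · refine Finset.sum_eq_zero ?_
          intro n _
          exact accf_of_ge L _ _ _ (by positivity) (by omega)
        · apply hC1 i j hi hj (v : ℤ)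
          have hT : inT12 L Z |(v : ℤ)| := by
            rw [habs]; left
            exact ⟨by exact_mod_cast Nat.one_le_iff_ne_zero.mpr hv0, by exact_mod_cast hvZ⟩
          rcases hcase with ⟨hij, _⟩ | hij
          · left
            refine ⟨hij, hT, ?_, ?_⟩
            · rw [habs]; exact_mod_cast Nat.one_le_iff_ne_zero.mpr hv0
            · rw [habs]
              have : v ≤ L - 1 := by omega
              have hc : (v : ℤ) ≤ (L : ℤ) - 1 := by
                have := hvL; omega
              exact hc
          · exact Or.inr ⟨hij, Or.inl hT⟩
    have h2 : accfHat L N (G j) (G i) ((L : ℤ) - (v : ℤ)) = 0 := by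
      by_cases hv0 : v = 0
      · subst hv0
        refine Finset.sum_eq_zero ?_
        intro n _
        exact accf_of_ge L _ _ _ (by omega) (by omega)
      · apply hC2 j i hj hi
        have habs2 : |(L : ℤ) - (v : ℤ)| = (L : ℤ) - (v : ℤ) := by
          apply abs_of_nonneg; omega
        rw [habs2]
        constructor
        · omega
        · omega
    rw [h1, h2, map_zero, add_zero]
  intro i j hi hj u hcond
  simp only
  have hZabs : |u| ≤ (Z : ℤ) := by
    rcases hcond with ⟨_, _, h⟩ | ⟨_, h⟩ <;> exact h
  rcases le_or_gt 0 u with hu | hu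
  · have habs3 : |u| = u := abs_of_nonneg hu
    rw [habs3] at hZabs
    have hu' : u = ((u.toNat : ℕ) : ℤ) := by omega
    rw [hu']
    apply key i j hi hj u.toNat (by omega)
    rcases hcond with ⟨hij, h1, _⟩ | ⟨hij, _⟩
    · rw [habs3] at h1; left; exact ⟨hij, by omega⟩
    · right; exact hij
  · have habs3 : |u| = -u := abs_of_neg hu
    rw [habs3] at hZabs
    have hu' : u = -(-u) := by ring
    rw [hu', pccf_neg (N * L) (by positivity)]
    have hv : -u = (((-u).toNat : ℕ) : ℤ) := by omega
    rw [hv]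
    have : pccf (N * L) (concatSeq L (G j)) (concatSeq L (G i)) (((-u).toNat : ℕ) : ℤ) = 0 := by
      apply key j i hj hi (-u).toNat (by omega)
      rcases hcond with ⟨hij, h1, _⟩ | ⟨hij, _⟩
      · rw [habs3] at h1; left; exact ⟨hij.symm, by omega⟩
      · right; exact hij.symm
    rw [this, map_zero]
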